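/- Let λ, λ_t > 0 and (β_t, θ_t) ∈ ℝ^p × ℝ^n with Ω(β_t) and Ω*(X^⊤θ_t) finite. Write ζ_t = −λ_t θ_t and u = −λθ_t; assume f* is finite at ζ_t and at u, differentiable at ζ_t, and the supremum defining f*(ζ_t) is attained at z_t = ∇f*(ζ_t). Set ρ = 1 − λ/λ_t. If V : ℝ^n → [0, ∞) vanishes at 0 and f*(u) − f*(ζ_t) − ⟨∇f*(ζ_t), u − ζ_t⟩ ≤ V(u − ζ_t), then Gap_λ(β_t, θ_t) ≤ Q_{t,V}(ρ). If U : ℝ^n → [0, ∞) vanishes at 0 and U(u − ζ_t) ≤ f*(u) − f*(ζ_t) − ⟨∇f*(ζ_t), u − ζ_t⟩, then Q_{t,U}(ρ) ≤ Gap_λ(β_t, θ_t). -/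

import Mathlib

/-!
The lemma is an exact identity: with `ρ = 1 - λ/λₜ` one has `-ρ ζₜ = u - ζₜ`, and, since `zₜ`
attains `f*(ζₜ)`, `Gap_λ = Gapₜ + ρ (Δₜ - Gapₜ) + D`, where
`D = f*(u) - f*(ζₜ) - ⟨zₜ, u - ζₜ⟩` is the Bregman divergence of `f*`.
Both inequalities follow by bounding `D` above by `V` or below by `U`.
-/

open scoped RealInnerProductSpace

noncomputable section

abbrev Vec (d : ℕ) := EuclideanSpace ℝ (Fin d)

/-- Matrix–vector product, landing in Euclidean space. -/
def mv {a b : ℕ} (M : Matrix (Fin a) (Fin b) ℝ) (v : Vec b) : Vec a := WithLp.toLp 2 (M.mulVec v)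

/-- Fenchel conjugate of a real-valued function, with values in `EReal`. -/
noncomputable def rconj {d : ℕ} (f : Vec d → ℝ) (u : Vec d) : EReal :=
  ⨆ x, ((⟪u, x⟫ - f x : ℝ) : EReal)

/-- Fenchel conjugate of an `EReal`-valued function. -/
noncomputable def econj {d : ℕ} (g : Vec d → EReal) (u : Vec d) : EReal :=
  ⨆ x, (((⟪u, x⟫ : ℝ) : EReal) - g x)

section GapIdentity

variable {E : Type*} [NormedAddCommGroup E] [InnerProductSpace ℝ E]

lemma neg_smul_smul_eq_sub_of_eq_one_sub_div {lam lamt ρ : ℝ} (hlamt : lamt ≠ 0)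
    (hρ : ρ = 1 - lam / lamt) (θ : E) :
    (-ρ) • ((-lamt) • θ) = (-lam) • θ - (-lamt) • θ := by
  rw [smul_smul, ← sub_smul, hρ]
  congr 1
  field_simp
  ring

lemma gap_interpolation_eq_sub_bregman {lam lamt ρ F fz fsζ fsu R : ℝ} (θ z : E)
    (hlamt : lamt ≠ 0) (hρ : ρ = 1 - lam / lamt) (hatt : fsζ = ⟪(-lamt) • θ, z⟫ - fz) :
    (F + fsζ + lamt * R) + ρ * ((F - fz) - (F + fsζ + lamt * R)) =
      (F + fsu + lam * R) - (fsu - fsζ - ⟪z, (-lam) • θ - (-lamt) • θ⟫) := by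
  have hρlamt : ρ * lamt = lamt - lam := by rw [hρ]; field_simp
  rw [inner_sub_right, real_inner_smul_right, real_inner_smul_right]
  rw [real_inner_smul_left, real_inner_comm] at hatt
  linear_combination (⟪z, θ⟫ - R) * hρlamt - ρ * hatt

end GapIdentity

/-- In the notation of the paper: `fsζ = f*(ζₜ)`, `fsu = f*(u)`, `Ωβ = Ω(βₜ)`,
`Ωs = Ω*(Xᵀθₜ)`; the left-hand and right-hand sides are `Gap_λ(βₜ, θₜ)` and `Q_{t,φ}(ρ)`. -/
theorem stmt2_general {n p : ℕ} (X : Matrix (Fin n) (Fin p) ℝ)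
    (f : Vec n → ℝ)
    (lam lamt : ℝ) (hlamt : 0 < lamt)
    (βt : Vec p) (θt : Vec n)
    (Ωβ Ωs : ℝ)
    (fsζ fsu : ℝ)
    (zt : Vec n)
    (hatt : fsζ = ⟪(-lamt) • θt, zt⟫ - f zt)
    (ρ : ℝ) (hρ : ρ = 1 - lam / lamt) :
    ((∀ V : Vec n → ℝ, V 0 = 0 → (∀ v, 0 ≤ V v) →
      fsu - fsζ - ⟪zt, (-lam) • θt - (-lamt) • θt⟫ ≤ V ((-lam) • θt - (-lamt) • θt) →
      f (mv X βt) + fsu + lam * (Ωβ + Ωs) ≤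
        (f (mv X βt) + fsζ + lamt * (Ωβ + Ωs))
          + ρ * ((f (mv X βt) - f zt) - (f (mv X βt) + fsζ + lamt * (Ωβ + Ωs)))
          + V ((-ρ) • ((-lamt) • θt)))) ∧
    ((∀ U : Vec n → ℝ, U 0 = 0 → (∀ v, 0 ≤ U v) →
      U ((-lam) • θt - (-lamt) • θt) ≤ fsu - fsζ - ⟪zt, (-lam) • θt - (-lamt) • θt⟫ →
      (f (mv X βt) + fsζ + lamt * (Ωβ + Ωs))
          + ρ * ((f (mv X βt) - f zt) - (f (mv X βt) + fsζ + lamt * (Ωβ + Ωs)))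
          + U ((-ρ) • ((-lamt) • θt)) ≤
        f (mv X βt) + fsu + lam * (Ωβ + Ωs))) := by
  rw [neg_smul_smul_eq_sub_of_eq_one_sub_div hlamt.ne' hρ θt,
    gap_interpolation_eq_sub_bregman (F := f (mv X βt)) (fsu := fsu) (R := Ωβ + Ωs)
      θt zt hlamt.ne' hρ hatt]
  exact ⟨fun V _ _ hV => by linarith, fun U _ _ hU => by linarith⟩

/-- Lemma 3.1: tracking the duality gap in the regularization parameter.
`ζt = -λt θt`, `u = -λ θt`; `f*` is finite at these points with values `fsζ`, `fsu`,
its defining supremum at `ζt` is attained at `zt = ∇f*(ζt)`, and `ρ = 1 - λ/λt`.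
With `Gapt = f(Xβt) + fsζ + λt(Ωβ + Ωs)`, `Δt = f(Xβt) - f(zt)`,
`Q_{t,φ}(ρ) = Gapt + ρ(Δt - Gapt) + φ(-ρ • ζt)` and
`Gap_λ(βt,θt) = f(Xβt) + fsu + λ(Ωβ + Ωs)`:
the `V`-smoothness of `f*` between `ζt` and `u` gives `Gap_λ ≤ Q_{t,V}(ρ)`,
and the `U`-convexity gives `Q_{t,U}(ρ) ≤ Gap_λ`. -/
theorem stmt2 {n p : ℕ} (X : Matrix (Fin n) (Fin p) ℝ)
    (f : Vec n → ℝ) (hconv : ConvexOn ℝ Set.univ f)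
    (Ω : Vec p → EReal)
    (lam lamt : ℝ) (hlam : 0 < lam) (hlamt : 0 < lamt)
    (βt : Vec p) (θt : Vec n)
    (Ωβ Ωs : ℝ)
    (hΩβ : Ω βt = (Ωβ : EReal))
    (hΩs : econj Ω (mv X.transpose θt) = (Ωs : EReal))
    (fsζ fsu : ℝ)
    (hfsζ : rconj f ((-lamt) • θt) = (fsζ : EReal))
    (hfsu : rconj f ((-lam) • θt) = (fsu : EReal))
    (zt : Vec n)
    (hatt : fsζ = ⟪(-lamt) • θt, zt⟫ - f zt)
    (ρ : ℝ) (hρ : ρ = 1 - lam / lamt) :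
    ((∀ V : Vec n → ℝ, V 0 = 0 → (∀ v, 0 ≤ V v) →
      fsu - fsζ - ⟪zt, (-lam) • θt - (-lamt) • θt⟫ ≤ V ((-lam) • θt - (-lamt) • θt) →
      f (mv X βt) + fsu + lam * (Ωβ + Ωs) ≤
        (f (mv X βt) + fsζ + lamt * (Ωβ + Ωs))
          + ρ * ((f (mv X βt) - f zt) - (f (mv X βt) + fsζ + lamt * (Ωβ + Ωs)))
          + V ((-ρ) • ((-lamt) • θt)))) ∧
    ((∀ U : Vec n → ℝ, U 0 = 0 → (∀ v, 0 ≤ U v) →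
      U ((-lam) • θt - (-lamt) • θt) ≤ fsu - fsζ - ⟪zt, (-lam) • θt - (-lamt) • θt⟫ →
      (f (mv X βt) + fsζ + lamt * (Ωβ + Ωs))
          + ρ * ((f (mv X βt) - f zt) - (f (mv X βt) + fsζ + lamt * (Ωβ + Ωs)))
          + U ((-ρ) • ((-lamt) • θt)) ≤
        f (mv X βt) + fsu + lam * (Ωβ + Ωs))) :=
  stmt2_general X f lam lamt hlamt βt θt Ωβ Ωs fsζ fsu zt hatt ρ hρ

end
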